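/- arXiv:1808.09356 — 4 statements merged into one kernel-verified Lean document; each statement's English description precedes it below -/
import Mathlib

section
/- Let V be a 4-dimensional real vector space and J : V → V a linear map with J ∘ J = −id. If β is a nonzero J-anti-invariant alternating bilinear form on V (i.e. β(Ju, Jv) = −β(u, v) for all u, v), then β is nondegenerate: for every nonzero u ∈ V there exists v ∈ V with β(u, v) ≠ 0. -/
/-!
If `β u = 0` for some `u ≠ 0`, anti-invariance gives `β (J u) = 0` as well, so `β` vanishes on
the plane `W = span {u, J u}`. For `x ∉ W`, the vectors `u, J u, x, J x` form a basis of `V`, and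
`β x` vanishes on each of them: on `x` because `β` is alternating, on `J x` because anti-invariance
forces `β w (J w) = -β w (J w)`. Hence `β = 0`.
-/

open Submodule

section ComplexStructure

variable {V : Type*} [AddCommGroup V] [Module ℝ V] {J : V →ₗ[ℝ] V}

lemma eq_zero_of_smul_add_smul_apply_mem (hJ : ∀ v, J (J v) = -v) {W : Submodule ℝ V}
    (hW : ∀ w ∈ W, J w ∈ W) {x : V} (hx : x ∉ W) {a b : ℝ} (h : a • x + b • J x ∈ W) :
    a = 0 ∧ b = 0 := by
  have hJh : a • J x - b • x ∈ W := by
    simpa [hJ, sub_eq_add_neg] using hW _ h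
  -- `(a • 1 + b • J) (a • 1 - b • J) = (a ^ 2 + b ^ 2) • 1`
  have hsq : (a ^ 2 + b ^ 2) • x ∈ W := by
    have hcomb : (a ^ 2 + b ^ 2) • x = a • (a • x + b • J x) - b • (a • J x - b • x) := by module
    rw [hcomb]
    exact W.sub_mem (W.smul_mem a h) (W.smul_mem b hJh)
  have hab : a ^ 2 + b ^ 2 = 0 := by
    by_contra hne
    exact hx ((W.smul_mem_iff hne).mp hsq)
  constructor <;> nlinarith [sq_nonneg a, sq_nonneg b]

lemma apply_mem_span_pair_apply (hJ : ∀ v, J (J v) = -v) (u : V) :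
    ∀ w ∈ span ℝ {u, J u}, J w ∈ span ℝ {u, J u} := by
  intro w hw
  obtain ⟨a, b, rfl⟩ := mem_span_pair.mp hw
  rw [mem_span_pair]
  exact ⟨-b, a, by simp [hJ, add_comm]⟩

lemma linearIndependent_four_of_notMem_span_pair (hJ : ∀ v, J (J v) = -v) {u x : V} (hu : u ≠ 0)
    (hx : x ∉ span ℝ {u, J u}) : LinearIndependent ℝ ![u, J u, x, J x] := by
  rw [Fintype.linearIndependent_iff]
  intro c hc
  simp only [Fin.sum_univ_four, Matrix.cons_val] at hc
  obtain ⟨hc2, hc3⟩ : c 2 = 0 ∧ c 3 = 0 := by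
    refine eq_zero_of_smul_add_smul_apply_mem hJ (apply_mem_span_pair_apply hJ u) hx ?_
    have hrest : c 2 • x + c 3 • J x = -(c 0 • u + c 1 • J u) := by
      linear_combination (norm := module) hc
    rw [hrest, neg_mem_iff, mem_span_pair]
    exact ⟨c 0, c 1, rfl⟩
  obtain ⟨hc0, hc1⟩ : c 0 = 0 ∧ c 1 = 0 := by
    refine eq_zero_of_smul_add_smul_apply_mem hJ (W := ⊥) (by simp) (by simpa using hu) ?_
    simpa [hc2, hc3] using hc
  intro i
  fin_cases i <;> assumption

lemma span_four_eq_top_of_notMem_span_pair (hdim : Module.finrank ℝ V = 4)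
    (hJ : ∀ v, J (J v) = -v) {u x : V} (hu : u ≠ 0) (hx : x ∉ span ℝ {u, J u}) :
    span ℝ (Set.range ![u, J u, x, J x]) = ⊤ := by
  have : FiniteDimensional ℝ V := Module.finite_of_finrank_pos (by omega)
  apply eq_top_of_finrank_eq
  rw [finrank_span_eq_card (linearIndependent_four_of_notMem_span_pair hJ hu hx), hdim,
    Fintype.card_fin]

end ComplexStructure

section AntiInvariantForm

variable {V : Type*} [AddCommGroup V] [Module ℝ V] {J : V →ₗ[ℝ] V} {β : V →ₗ[ℝ] V →ₗ[ℝ] ℝ}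

lemma anti_invariant_apply_self_apply_eq_zero (hJ : ∀ v, J (J v) = -v) (halt : β.IsAlt)
    (hanti : ∀ u v, β (J u) (J v) = -β u v) (w : V) : β w (J w) = 0 := by
  have h := hanti w (J w)
  rw [hJ, map_neg, ← halt.neg] at h
  linarith

lemma anti_invariant_apply_eq_zero_of_eq_zero (hJ : ∀ v, J (J v) = -v)
    (hanti : ∀ u v, β (J u) (J v) = -β u v) {u : V} (hu : β u = 0) : β (J u) = 0 := by
  ext v
  have hv : J (-J v) = v := by rw [map_neg, hJ, neg_neg]
  rw [← hv, hanti, hu, LinearMap.zero_apply, LinearMap.zero_apply, neg_zero]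

end AntiInvariantForm

/-- On a 4-dimensional real vector space with a linear complex structure `J`,
every nonzero `J`-anti-invariant alternating bilinear form is nondegenerate. -/
theorem anti_invariant_form_nondegenerate
    {V : Type*} [AddCommGroup V] [Module ℝ V]
    (hdim : Module.finrank ℝ V = 4)
    (J : V →ₗ[ℝ] V) (hJ : ∀ v : V, J (J v) = -v)
    (β : V →ₗ[ℝ] V →ₗ[ℝ] ℝ)
    (halt : ∀ v : V, β v v = 0)
    (hanti : ∀ u v : V, β (J u) (J v) = -β u v)
    (hne : β ≠ 0) :
    ∀ u : V, u ≠ 0 → ∃ v : V, β u v ≠ 0 := by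
  have hβ : β.IsAlt := halt
  by_contra! hdeg
  obtain ⟨u, hu0, hu⟩ := hdeg
  have hβu : β u = 0 := LinearMap.ext hu
  have hβJu : β (J u) = 0 := anti_invariant_apply_eq_zero_of_eq_zero hJ hanti hβu
  refine hne (LinearMap.ext fun x => ?_)
  by_cases hx : x ∈ span ℝ {u, J u}
  · obtain ⟨a, b, rfl⟩ := mem_span_pair.mp hx
    simp [hβu, hβJu]
  · refine LinearMap.ext_on_range (span_four_eq_top_of_notMem_span_pair hdim hJ hu0 hx)
      fun i => ?_
    fin_cases i
    · simp [← hβ.neg u x, hβu]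
    · simp [← hβ.neg (J u) x, hβJu]
    · simp [halt]
    · simp [anti_invariant_apply_self_apply_eq_zero hJ hβ hanti]
end

section
/- (Two-variable extension lemma, core of the proof of Proposition 5.2.) Let ρ > 0 and let D ⊂ ℂ be the open disk of radius ρ centred at 0. Let F : (D × D) ∖ {(0,0)} → ℂ be infinitely differentiable (over ℝ) on this open subset of ℂ², and assume: (i) for every w ∈ D with w ≠ 0, the function ξ ↦ F(ξ, w) is holomorphic on D; (ii) the function ξ ↦ F(ξ, 0) is holomorphic on D ∖ {0}; (iii) the function w ↦ F(0, w) is holomorphic on D ∖ {0}. Then there exist a complex number c and holomorphic functions G, H : D → ℂ such that G(ξ) = F(ξ, 0) for all ξ ∈ D ∖ {0}, H(w) = F(0, w) for all w ∈ D ∖ {0}, and G(0) = H(0) = c. -/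
open Complex Metric Topology Filter Set

/-! Fix `0 < r < ρ`. The function `F` is bounded on the compact set
`sphere 0 r ×ˢ closedBall 0 r`, so by the maximum modulus principle on each slice `w ≠ 0`, and by
continuity at `w = 0`, it is bounded on the punctured closed bidisk of radius `r`. Riemann's
removable singularity theorem then extends both axis restrictions holomorphically across `0`.
For the common value, the Schwarz lemma bounds `‖F (ξ, w) - F (0, w)‖ ≤ (2M / r) ‖ξ‖` uniformly
in `w ≠ 0`; letting `w → 0` gives `‖F (ξ, 0) - H 0‖ ≤ (2M / r) ‖ξ‖`, so `F (ξ, 0) → H 0`. -/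

variable {E : Type*} [NormedAddCommGroup E] [NormedSpace ℂ E]

lemma norm_le_of_forall_mem_sphere_norm_le {f : ℂ → E} {c : ℂ} {r C : ℝ} (hr : 0 < r)
    (hf : DifferentiableOn ℂ f (closedBall c r)) (hC : ∀ z ∈ sphere c r, ‖f z‖ ≤ C) {z : ℂ}
    (hz : z ∈ closedBall c r) : ‖f z‖ ≤ C := by
  rw [← closure_ball c hr.ne'] at hf hz
  exact Complex.norm_le_of_forall_mem_frontier_norm_le isBounded_ball hf.diffContOnCl
    (by rwa [frontier_ball c hr.ne']) hz

lemma dist_le_of_forall_mem_ball_norm_le {f : ℂ → E} {c z : ℂ} {r M : ℝ}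
    (hf : DifferentiableOn ℂ f (ball c r)) (hM : ∀ z ∈ ball c r, ‖f z‖ ≤ M)
    (hz : z ∈ ball c r) : dist (f z) (f c) ≤ 2 * M / r * dist z c := by
  refine Complex.dist_le_div_mul_dist_of_mapsTo_ball hf (fun y hy => ?_) hz
  rw [mem_closedBall, dist_eq_norm, two_mul]
  exact norm_sub_le_of_le (hM y hy) (hM c (mem_ball_self (pos_of_mem_ball hz)))

lemma differentiableOn_update_limUnder_of_eventually_norm_le [CompleteSpace E] {f : ℂ → E}
    {s : Set ℂ} {c : ℂ} {M : ℝ} (hc : s ∈ 𝓝 c) (hd : DifferentiableOn ℂ f (s \ {c}))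
    (hb : ∀ᶠ z in 𝓝[≠] c, ‖f z‖ ≤ M) :
    DifferentiableOn ℂ (Function.update f c (limUnder (𝓝[≠] c) f)) s := by
  refine Complex.differentiableOn_update_limUnder_of_isLittleO hc hd
    (IsBoundedUnder.isLittleO_sub_self_inv ⟨M + ‖f c‖, eventually_map.2 ?_⟩)
  filter_upwards [hb] with z hz
  exact norm_sub_le_of_le hz le_rfl

lemma tendsto_of_eventually_dist_le_mul_dist {X Y : Type*} [PseudoMetricSpace X]
    [PseudoMetricSpace Y] {g : X → Y} {a : X} {s : Set X} {L : Y} {K : ℝ}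
    (h : ∀ᶠ x in 𝓝[s] a, dist (g x) L ≤ K * dist x a) : Tendsto g (𝓝[s] a) (𝓝 L) := by
  have hK : Tendsto (fun x => K * dist x a) (𝓝[s] a) (𝓝 0) := by
    have := ((tendsto_id (x := 𝓝 a)).dist (tendsto_const_nhds (x := a))).const_mul K
    rw [dist_self, mul_zero] at this
    exact this.mono_left nhdsWithin_le_nhds
  exact tendsto_iff_dist_tendsto_zero.2
    (squeeze_zero' (.of_forall fun _ => dist_nonneg) h hK)

lemma tendsto_nhdsNE_snd_of_continuousOn {X : Type*} [TopologicalSpace X] {ρ : ℝ}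
    {F : ℂ × ℂ → X}
    (hFc : ContinuousOn F ((ball (0 : ℂ) ρ ×ˢ ball (0 : ℂ) ρ) \ {(0, 0)})) {ξ : ℂ}
    (hξ : ξ ∈ ball (0 : ℂ) ρ) (hξ0 : ξ ≠ 0) :
    Tendsto (fun w => F (ξ, w)) (𝓝[≠] 0) (𝓝 (F (ξ, 0))) := by
  have hmem : (ξ, (0 : ℂ)) ∈ (ball (0 : ℂ) ρ ×ˢ ball (0 : ℂ) ρ) \ {(0, 0)} :=
    ⟨⟨hξ, mem_ball_self (pos_of_mem_ball hξ)⟩, by simp [hξ0]⟩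
  have hF : ContinuousAt F (ξ, 0) :=
    hFc.continuousAt (((isOpen_ball.prod isOpen_ball).sdiff isClosed_singleton).mem_nhds hmem)
  exact hF.tendsto.comp
    ((Continuous.prodMk_right ξ).tendsto 0 |>.mono_left nhdsWithin_le_nhds)

section PuncturedBidisk

variable {ρ r M : ℝ} {F : ℂ × ℂ → E}

lemma exists_norm_le_of_continuousOn_of_differentiableOn_fst
    (hFc : ContinuousOn F ((ball (0 : ℂ) ρ ×ˢ ball (0 : ℂ) ρ) \ {(0, 0)}))
    (h1 : ∀ w ∈ ball (0 : ℂ) ρ, w ≠ 0 → DifferentiableOn ℂ (fun ξ => F (ξ, w)) (ball (0 : ℂ) ρ))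
    (hr : 0 < r) (hrρ : r < ρ) :
    ∃ M, ∀ ξ ∈ closedBall (0 : ℂ) r, ∀ w ∈ closedBall (0 : ℂ) r, (ξ, w) ≠ (0, 0) →
      ‖F (ξ, w)‖ ≤ M := by
  have hsub : closedBall (0 : ℂ) r ⊆ ball 0 ρ := closedBall_subset_ball hrρ
  have hK : sphere (0 : ℂ) r ×ˢ closedBall (0 : ℂ) r ⊆
      (ball (0 : ℂ) ρ ×ˢ ball (0 : ℂ) ρ) \ {(0, 0)} :=
    fun p hp => ⟨⟨hsub (sphere_subset_closedBall hp.1), hsub hp.2⟩,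
      fun h => ne_of_mem_sphere hp.1 hr.ne' (congrArg Prod.fst h)⟩
  obtain ⟨M, hM⟩ := ((isCompact_sphere 0 r).prod
    (isCompact_closedBall 0 r)).exists_bound_of_continuousOn (hFc.mono hK)
  have hslice : ∀ w ∈ closedBall (0 : ℂ) r, w ≠ 0 → ∀ ξ ∈ closedBall (0 : ℂ) r,
      ‖F (ξ, w)‖ ≤ M := fun w hw hw0 _ =>
    norm_le_of_forall_mem_sphere_norm_le hr ((h1 w (hsub hw) hw0).mono hsub)
      fun z hz => hM (z, w) ⟨hz, hw⟩
  refine ⟨M, fun ξ hξ w hw hne => ?_⟩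
  rcases eq_or_ne w 0 with rfl | hw0
  · have hξ0 : ξ ≠ 0 := fun h => hne (by rw [h])
    refine le_of_tendsto (tendsto_nhdsNE_snd_of_continuousOn hFc (hsub hξ) hξ0).norm ?_
    filter_upwards [sdiff_mem_nhdsWithin_compl (closedBall_mem_nhds (0 : ℂ) hr) {0}]
      with w hw using hslice w hw.1 hw.2 ξ hξ
  · exact hslice w hw hw0 ξ hξ

lemma tendsto_fst_axis_of_tendsto_snd_axis
    (hFc : ContinuousOn F ((ball (0 : ℂ) ρ ×ˢ ball (0 : ℂ) ρ) \ {(0, 0)}))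
    (h1 : ∀ w ∈ ball (0 : ℂ) ρ, w ≠ 0 → DifferentiableOn ℂ (fun ξ => F (ξ, w)) (ball (0 : ℂ) ρ))
    (hr : 0 < r) (hrρ : r < ρ)
    (hM : ∀ ξ ∈ closedBall (0 : ℂ) r, ∀ w ∈ closedBall (0 : ℂ) r, (ξ, w) ≠ (0, 0) →
      ‖F (ξ, w)‖ ≤ M)
    {L : E} (hL : Tendsto (fun w => F (0, w)) (𝓝[≠] 0) (𝓝 L)) :
    Tendsto (fun ξ => F (ξ, 0)) (𝓝[≠] 0) (𝓝 L) := by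
  have hsub : ball (0 : ℂ) r ⊆ ball 0 ρ := ball_subset_ball hrρ.le
  have hschwarz : ∀ w ∈ ball (0 : ℂ) r, w ≠ 0 → ∀ ξ ∈ ball (0 : ℂ) r,
      dist (F (ξ, w)) (F (0, w)) ≤ 2 * M / r * dist ξ 0 := fun w hw hw0 ξ hξ =>
    dist_le_of_forall_mem_ball_norm_le ((h1 w (hsub hw) hw0).mono hsub)
      (fun z hz => hM z (ball_subset_closedBall hz) w (ball_subset_closedBall hw) (by simp [hw0]))
      hξ
  refine tendsto_of_eventually_dist_le_mul_dist (K := 2 * M / r) ?_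
  filter_upwards [sdiff_mem_nhdsWithin_compl (ball_mem_nhds (0 : ℂ) hr) {0}] with ξ hξ
  refine le_of_tendsto ((tendsto_nhdsNE_snd_of_continuousOn hFc (hsub hξ.1) hξ.2).dist hL) ?_
  filter_upwards [sdiff_mem_nhdsWithin_compl (ball_mem_nhds (0 : ℂ) hr) {0}]
    with w hw using hschwarz w hw.1 hw.2 ξ hξ.1

end PuncturedBidisk

/-- two-variable extension lemma, core of the proof of Proposition 5.2:
a function on a punctured bidisk, holomorphic in the first variable for each nonzero
value of the second, and holomorphic on both punctured axes, extends holomorphically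
along both axes with a common value at the origin. -/
theorem two_variable_extension
    (ρ : ℝ) (hρ : 0 < ρ) (F : ℂ × ℂ → ℂ)
    (hF : ContDiffOn ℝ (⊤ : ℕ∞) F ((ball (0 : ℂ) ρ ×ˢ ball (0 : ℂ) ρ) \ {(0, 0)}))
    (h1 : ∀ w ∈ ball (0 : ℂ) ρ, w ≠ 0 →
      DifferentiableOn ℂ (fun ξ : ℂ => F (ξ, w)) (ball (0 : ℂ) ρ))
    (h2 : DifferentiableOn ℂ (fun ξ : ℂ => F (ξ, 0)) (ball (0 : ℂ) ρ \ {0}))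
    (h3 : DifferentiableOn ℂ (fun w : ℂ => F (0, w)) (ball (0 : ℂ) ρ \ {0})) :
    ∃ (c : ℂ) (G H : ℂ → ℂ),
      DifferentiableOn ℂ G (ball (0 : ℂ) ρ) ∧
      DifferentiableOn ℂ H (ball (0 : ℂ) ρ) ∧
      (∀ ξ ∈ ball (0 : ℂ) ρ \ {0}, G ξ = F (ξ, 0)) ∧
      (∀ w ∈ ball (0 : ℂ) ρ \ {0}, H w = F (0, w)) ∧
      G 0 = c ∧ H 0 = c := by
  have hr : 0 < ρ / 2 := half_pos hρ
  obtain ⟨M, hM⟩ := exists_norm_le_of_continuousOn_of_differentiableOn_fst hF.continuousOn h1 hr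
    (half_lt_self hρ)
  have hpunct := sdiff_mem_nhdsWithin_compl (closedBall_mem_nhds (0 : ℂ) hr) {0}
  have hG := differentiableOn_update_limUnder_of_eventually_norm_le (ball_mem_nhds 0 hρ) h2
    (eventually_of_mem hpunct fun ξ hξ =>
      hM ξ hξ.1 0 (mem_closedBall_self hr.le) (by simpa using hξ.2))
  have hH := differentiableOn_update_limUnder_of_eventually_norm_le (ball_mem_nhds 0 hρ) h3
    (eventually_of_mem hpunct fun w hw =>
      hM 0 (mem_closedBall_self hr.le) w hw.1 (by simpa using hw.2))
  have hHlim := continuousAt_update_same.mp (hH.continuousOn.continuousAt (ball_mem_nhds 0 hρ))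
  refine ⟨_, _, _, hG, hH, fun ξ hξ => Function.update_of_ne hξ.2 _ _,
    fun w hw => Function.update_of_ne hw.2 _ _, ?_, rfl⟩
  rw [Function.update_self, Function.update_self, (tendsto_fst_axis_of_tendsto_snd_axis
    hF.continuousOn h1 hr (half_lt_self hρ) hM hHlim).limUnder_eq]
end

section
/- (Vanishing of negative Laurent coefficients at the central parameter; a step in the proof of Proposition 5.2.) Let ρ > 0 and let D ⊂ ℂ be the open disk of radius ρ centred at 0. Let F : (D × D) ∖ {(0,0)} → ℂ be infinitely differentiable (over ℝ) on this open subset of ℂ², and assume: (i) for every w ∈ D with w ≠ 0, the function ξ ↦ F(ξ, w) is holomorphic on D; (ii) the function ξ ↦ F(ξ, 0) is holomorphic on D ∖ {0}. Then for every integer k ≥ 0 and every r ∈ (0, ρ), the circle integral ∮_{|ξ| = r} F(ξ, 0)·ξ^k dξ equals 0. -/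
open Complex Metric Set Topology

/-!
For `w ≠ 0` the integrand `F(ξ, w) ξ^k` is holomorphic in `ξ` on the disk, so its circle integral
vanishes by Cauchy's theorem. The set `|ξ| = r`, `|w| < ρ` avoids `(0, 0)`, so `F` is continuous
there and, the circle being compact, `F(·, w) → F(·, 0)` uniformly on it as `w → 0`; hence the
circle integral at `w = 0` is a limit of zeros.
-/

theorem ContinuousOn.tendstoUniformlyOn_of_isCompact {α β γ : Type*} [UniformSpace α]
    [LocallyCompactSpace α] [UniformSpace β] [UniformSpace γ] {f : α → β → γ} {x : α}
    {U : Set α} {K : Set β} (hU : U ∈ 𝓝 x) (hK : IsCompact K) (hf : ContinuousOn ↿f (U ×ˢ K)) :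
    TendstoUniformlyOn f (f x) (𝓝 x) K := by
  have : CompactSpace K := isCompact_iff_compactSpace.mp hK
  rw [tendstoUniformlyOn_iff_tendstoUniformly_comp_coe]
  refine ContinuousOn.tendstoUniformly (f := fun y (z : K) => f y z) hU ?_
  exact hf.comp (continuous_id.prodMap continuous_subtype_val).continuousOn
    fun p hp => ⟨hp.1, p.2.2⟩

theorem ContinuousOn.continuousAt_circleIntegral {α E : Type*} [UniformSpace α]
    [LocallyCompactSpace α] [FirstCountableTopology α] [NormedAddCommGroup E] [NormedSpace ℂ E]
    {f : α → ℂ → E} {x : α} {U : Set α} {c : ℂ} {R : ℝ} (hU : U ∈ 𝓝 x) (hR : 0 ≤ R)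
    (hf : ContinuousOn ↿f (U ×ˢ sphere c R)) :
    ContinuousAt (fun y => ∮ z in C(c, R), f y z) x := by
  refine (hf.tendstoUniformlyOn_of_isCompact hU (isCompact_sphere c R))
    |>.tendsto_circleIntegral_of_continuousOn hR ?_
  filter_upwards [hU] with y hy
  exact hf.comp (continuous_const.prodMk continuous_id).continuousOn fun z hz => ⟨hy, hz⟩

theorem negative_laurent_coefficients_vanish_general
    (ρ : ℝ) (F : ℂ × ℂ → ℂ)
    (hF : ContDiffOn ℝ (⊤ : ℕ∞) F ((ball (0 : ℂ) ρ ×ˢ ball (0 : ℂ) ρ) \ {(0, 0)}))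
    (h1 : ∀ w ∈ ball (0 : ℂ) ρ, w ≠ 0 →
      DifferentiableOn ℂ (fun ξ : ℂ => F (ξ, w)) (ball (0 : ℂ) ρ)) :
    ∀ (k : ℕ) (r : ℝ), 0 < r → r < ρ →
      (∮ ξ in C(0, r), F (ξ, 0) * ξ ^ k) = 0 := by
  intro k r hr hrρ
  set g : ℂ → ℂ := fun w => ∮ ξ in C(0, r), F (ξ, w) * ξ ^ k
  have hsphere : MapsTo Prod.swap (ball (0 : ℂ) ρ ×ˢ sphere (0 : ℂ) r)
      ((ball (0 : ℂ) ρ ×ˢ ball (0 : ℂ) ρ) \ {(0, 0)}) := by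
    rintro ⟨w, ξ⟩ ⟨hw, hξ⟩
    have hξ' : ‖ξ‖ = r := mem_sphere_zero_iff_norm.mp hξ
    refine ⟨⟨mem_ball_zero_iff.mpr (hξ' ▸ hrρ), hw⟩, fun h => ?_⟩
    simp only [Prod.swap_prod_mk, mem_singleton_iff, Prod.mk.injEq] at h
    simp [h.1, hr.ne] at hξ'
  have hg_cont : ContinuousAt g 0 := by
    refine ContinuousOn.continuousAt_circleIntegral (ball_mem_nhds 0 (hr.trans hrρ)) hr.le ?_
    exact (hF.continuousOn.comp continuous_swap.continuousOn hsphere).mul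
      (continuous_snd.pow k).continuousOn
  have hg_zero : g =ᶠ[𝓝[≠] 0] fun _ => 0 := by
    filter_upwards [self_mem_nhdsWithin,
      nhdsWithin_le_nhds (ball_mem_nhds 0 (hr.trans hrρ))] with w hw0 hw
    exact (((h1 w hw hw0).mul (differentiable_pow k).differentiableOn).diffContOnCl_ball
      (closedBall_subset_ball hrρ)).circleIntegral_eq_zero hr.le
  exact ((hg_cont.eventuallyEq_nhds_iff_eventuallyEq_nhdsNE continuousAt_const).mp
    hg_zero).eq_of_nhds

/-- vanishing of negative Laurent coefficients at the central parameter;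
a step in the proof of Proposition 5.2: all circle integrals `∮_{|ξ|=r} F(ξ,0)·ξ^k dξ`
with `k ≥ 0` vanish. -/
theorem negative_laurent_coefficients_vanish
    (ρ : ℝ) (hρ : 0 < ρ) (F : ℂ × ℂ → ℂ)
    (hF : ContDiffOn ℝ (⊤ : ℕ∞) F ((ball (0 : ℂ) ρ ×ˢ ball (0 : ℂ) ρ) \ {(0, 0)}))
    (h1 : ∀ w ∈ ball (0 : ℂ) ρ, w ≠ 0 →
      DifferentiableOn ℂ (fun ξ : ℂ => F (ξ, w)) (ball (0 : ℂ) ρ))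
    (h2 : DifferentiableOn ℂ (fun ξ : ℂ => F (ξ, 0)) (ball (0 : ℂ) ρ \ {0})) :
    ∀ (k : ℕ) (r : ℝ), 0 < r → r < ρ →
      (∮ ξ in C(0, r), F (ξ, 0) * ξ ^ k) = 0 :=
  negative_laurent_coefficients_vanish_general ρ F hF h1
end

section
/- (Uniqueness of the multiplicity functional; Proposition 6.1 of the paper.) Let D ⊂ ℂ be the open unit disk. Call a continuous map u : D → ℂ admissible if the closure in ℂ of its zero set {z ∈ D : u(z) = 0} is contained in D. Suppose I₁ and I₂ are integer-valued functions defined on all admissible maps, each satisfying the following five properties (stated for I): (1) I(u) = 0 whenever u has no zeros in D; (2) if h : [0,1] × D → ℂ is continuous and there is a compact set K ⊂ D such that h(t, z) ≠ 0 for all t ∈ [0,1] and all z ∈ D ∖ K, then I(h(0, ·)) = I(h(1, ·)); (3) I(u ∘ c) = −I(u), where c : D → D is complex conjugation c(z) = conj(z); (4) if u is admissible and θ₁, …, θ_N are affine maps θⱼ(z) = aⱼ + rⱼ·z with rⱼ > 0, whose images θⱼ(D) are pairwise disjoint with closures contained in D, and the zero set of u is contained in the union of the θⱼ(D), then I(u)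 = Σⱼ I(u ∘ θⱼ); (5) if u is admissible and holomorphic on D, then I(u) equals the sum, over the (finitely many) zeros z of u in D, of the order of vanishing of u at z. Then I₁(u) = I₂(u) for every admissible map u. -/
open Complex Metric

/-- The open unit disk in `ℂ`. -/
def unitDisk : Set ℂ := ball (0 : ℂ) 1

/-- A continuous map `u : D → ℂ` is admissible if the closure of its zero set is
contained in the open unit disk `D`. -/
def Admissible (u : ℂ → ℂ) : Prop :=
  ContinuousOn u unitDisk ∧ closure {z ∈ unitDisk | u z = 0} ⊆ unitDisk

/-- The five axioms of the multiplicity functional (Proposition 6.1 of the paper),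
for an integer-valued functional `I` on maps `D → ℂ` (encoded as total functions on
`ℂ` together with the requirement that `I` only depends on the restriction to `D`). -/
def MultiplicityAxioms (I : (ℂ → ℂ) → ℤ) : Prop :=
  -- `I` depends only on the restriction to the unit disk
  (∀ u v : ℂ → ℂ, Admissible u → (∀ z ∈ unitDisk, u z = v z) → I u = I v) ∧
  -- (1) vanishing for nowhere-zero maps
  (∀ u : ℂ → ℂ, Admissible u → (∀ z ∈ unitDisk, u z ≠ 0) → I u = 0) ∧
  -- (2) homotopy invariance through admissible homotopies
  (∀ h : ℝ × ℂ → ℂ, ContinuousOn h (Set.Icc (0 : ℝ) 1 ×ˢ unitDisk) →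
    (∃ K : Set ℂ, IsCompact K ∧ K ⊆ unitDisk ∧
      ∀ t ∈ Set.Icc (0 : ℝ) 1, ∀ z ∈ unitDisk \ K, h (t, z) ≠ 0) →
    I (fun z => h (0, z)) = I (fun z => h (1, z))) ∧
  -- (3) behaviour under conjugation
  (∀ u : ℂ → ℂ, Admissible u →
    I (fun z => u ((starRingEnd ℂ) z)) = -I u) ∧
  -- (4) additivity over disjoint subdisks containing the zero set
  (∀ u : ℂ → ℂ, Admissible u → ∀ (N : ℕ) (a : Fin N → ℂ) (r : Fin N → ℝ),
    (∀ j, 0 < r j) →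
    (∀ j, closure (ball (a j) (r j)) ⊆ unitDisk) →
    (Pairwise fun i j : Fin N => Disjoint (ball (a i) (r i)) (ball (a j) (r j))) →
    {z ∈ unitDisk | u z = 0} ⊆ ⋃ j, ball (a j) (r j) →
    I u = ∑ j : Fin N, I (fun z => u (a j + (r j : ℂ) * z))) ∧
  -- (5) normalisation on holomorphic maps: sum of orders of vanishing
  (∀ u : ℂ → ℂ, Admissible u → DifferentiableOn ℂ u unitDisk →
    ∀ Z : Finset ℂ, (Z : Set ℂ) = {z ∈ unitDisk | u z = 0} →
    ∀ ord : ℂ → ℕ,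
      (∀ z ∈ Z, ∃ gfun : ℂ → ℂ, AnalyticAt ℂ gfun z ∧ gfun z ≠ 0 ∧
        ∀ᶠ w in nhds z, u w = (w - z) ^ ord z * gfun w) →
      I u = ∑ z ∈ Z, (ord z : ℤ))

/-!
Choose `r < 1` such that `u` has no zeros with `r ≤ ‖z‖`. Precomposing with the radial retraction
`ν` onto the closed `r`-ball is an admissible homotopy, so `I u = I (u ∘ ν)`. Lifting
`θ ↦ u (r e^{iθ})` through `exp` shows that on the circle `‖z‖ = r` we have `u · exp F = powerMap d`
for an integer `d` (the winding number) and a function `F` of `arg z`. Multiplying `u ∘ ν` by `exp`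
of a copy of `F` cut off near `0` is again an admissible homotopy, and the result agrees with
`powerMap d ∘ ν` off the `r`-ball, so a straight-line homotopy and one more retraction give
`I u = I (powerMap d)`. The normalisation on `z ^ n` and the conjugation rule give
`I (powerMap d) = d`, which does not depend on `I`.
-/

open ComplexConjugate Topology

theorem exists_continuous_exp_eq {X : Type*} [TopologicalSpace X] [SimplyConnectedSpace X]
    [LocallyPathConnectedSpace X] {f : X → ℂ} (hf : Continuous f) (h0 : ∀ x, f x ≠ 0) :
    ∃ ℓ : X → ℂ, Continuous ℓ ∧ ∀ x, exp (ℓ x) = f x := by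
  obtain ⟨x₀⟩ : Nonempty X := inferInstance
  obtain ⟨ℓ, -, hℓ⟩ := (isCoveringMapOn_exp.existsUnique_continuousMap_lifts ⟨f, hf⟩
    (exp_log (h0 x₀)) h0).exists
  exact ⟨ℓ, ℓ.continuous, congrFun hℓ⟩

open Real in
theorem exists_exp_int_mul_add_angle {f : ℝ → ℂ} (hf : Continuous f) (h0 : ∀ θ, f θ ≠ 0)
    (hπ : f (-π) = f π) :
    ∃ (d : ℤ) (A : Real.Angle → ℂ), Continuous A ∧
      ∀ θ ∈ Set.Ioc (-π) π, f θ = exp (d * θ * I + A θ) := by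
  have : Fact (0 < 2 * π) := ⟨two_pi_pos⟩
  have hπ' : -π + 2 * π = π := by ring
  obtain ⟨ℓ, hℓ, hℓf⟩ := exists_continuous_exp_eq hf h0
  obtain ⟨d, hd⟩ := exp_eq_exp_iff_exists_int.mp ((hℓf π).trans ((hℓf (-π)).trans hπ).symm)
  -- `ℓ π - ℓ (-π) = 2πid`, so `Δ` takes the same value at `±π` and descends to the circle.
  set Δ : ℝ → ℂ := fun θ => ℓ θ - d * θ * I
  have hΔ : Δ (-π) = Δ (-π + 2 * π) := by
    simp only [Δ, hπ', hd]
    push_cast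
    ring
  refine ⟨d, AddCircle.liftIoc (2 * π) (-π) Δ,
    AddCircle.liftIoc_continuous hΔ (by fun_prop), fun θ hθ => ?_⟩
  have hA : AddCircle.liftIoc (2 * π) (-π) Δ (θ : Real.Angle) = Δ θ :=
    AddCircle.liftIoc_coe_apply (by rwa [hπ'])
  rw [hA, ← hℓf, add_sub_cancel]

-- `z ^ d` for `0 ≤ d` and `conj z ^ (-d)` for `d < 0`: one of the two exponents is `0`.
def powerMap (d : ℤ) (z : ℂ) : ℂ := z ^ d.toNat * conj z ^ (-d).toNat

theorem continuous_powerMap (d : ℤ) : Continuous (powerMap d) := by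
  unfold powerMap; fun_prop

theorem powerMap_ne_zero (d : ℤ) {z : ℂ} (hz : z ≠ 0) : powerMap d z ≠ 0 := by
  unfold powerMap; simp [hz]

theorem powerMap_ofReal_mul_exp (d : ℤ) (r θ : ℝ) :
    powerMap d (r * exp (θ * I)) = r ^ d.natAbs * exp (d * θ * I) := by
  have hconj : conj ((r : ℂ) * exp (θ * I)) = r * exp (-(θ * I)) := by
    rw [map_mul, ← exp_conj, map_mul, conj_ofReal, conj_ofReal, conj_I, mul_neg]
  have hd : (d : ℂ) = d.toNat - (-d).toNat := by exact_mod_cast (Int.toNat_sub_toNat_neg d).symm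
  rw [powerMap, hconj, mul_pow, mul_pow, ← exp_nat_mul, ← exp_nat_mul, mul_mul_mul_comm, ← pow_add,
    Int.toNat_add_toNat_neg_eq_natAbs, ← exp_add, hd]
  ring_nf

theorem exists_mul_exp_eq_powerMap_on_sphere {u : ℂ → ℂ} {r : ℝ} (hr : 0 < r)
    (hu : ContinuousOn u (sphere 0 r)) (hne : ∀ w ∈ sphere (0 : ℂ) r, u w ≠ 0) :
    ∃ (d : ℤ) (F : ℂ → ℂ), (∀ z ≠ 0, ContinuousAt F z) ∧
      ∀ w ∈ sphere (0 : ℂ) r, u w * exp (F w) = powerMap d w := by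
  set γ : ℝ → ℂ := fun θ => r * exp (θ * I)
  have hγ : ∀ θ, γ θ ∈ sphere (0 : ℂ) r := fun θ => by
    simp [γ, norm_exp_ofReal_mul_I, abs_of_pos hr]
  have hγπ : γ (-Real.pi) = γ Real.pi := by
    simp only [γ, ofReal_neg, neg_mul, exp_neg, exp_pi_mul_I]
    norm_num
  obtain ⟨d, A, hA, hAeq⟩ := exists_exp_int_mul_add_angle (f := u ∘ γ)
    (hu.comp_continuous (by fun_prop) hγ) (fun θ => hne _ (hγ θ)) (congrArg u hγπ)
  refine ⟨d, fun z => d.natAbs * log r - A (arg z),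
    fun z hz => continuousAt_const.sub (hA.continuousAt.comp (continuousAt_arg_coe_angle hz)),
    fun w hw => ?_⟩
  have hγw : γ (arg w) = w := by
    rw [mem_sphere_zero_iff_norm] at hw
    simpa [γ, hw] using norm_mul_exp_arg_mul_I w
  have hu_w : u w = exp (d * arg w * I + A (arg w)) := by
    have := hAeq _ (arg_mem_Ioc w)
    rwa [Function.comp_apply, hγw] at this
  rw [← hγw, powerMap_ofReal_mul_exp, hγw, hu_w, ← exp_add,
    show ∀ a b c : ℂ, a + b + (c - b) = a + c by intros; ring, exp_add, exp_nat_mul,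
    exp_log (ofReal_ne_zero.2 hr.ne'), mul_comm]

noncomputable def radialRetraction (r : ℝ) (z : ℂ) : ℂ := (r / max r ‖z‖ : ℝ) * z

section radialRetraction

variable {r : ℝ} {z : ℂ}

theorem radialRetraction_of_le (h : r ≤ ‖z‖) : radialRetraction r z = (r / ‖z‖ : ℝ) * z := by
  rw [radialRetraction, max_eq_right h]

theorem norm_radialRetraction_of_le (hr : 0 < r) (h : r ≤ ‖z‖) : ‖radialRetraction r z‖ = r := by
  rw [radialRetraction_of_le h, norm_mul, norm_real, Real.norm_of_nonneg (by positivity),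
    div_mul_cancel₀ _ (hr.trans_le h).ne']

theorem norm_radialRetraction_le (hr : 0 < r) (z : ℂ) : ‖radialRetraction r z‖ ≤ ‖z‖ := by
  rw [radialRetraction, norm_mul, norm_real, Real.norm_of_nonneg (by positivity)]
  exact mul_le_of_le_one_left (norm_nonneg z) (div_le_one_of_le₀ (le_max_left _ _) (by positivity))

theorem radialRetraction_ne_zero (hr : 0 < r) (hz : z ≠ 0) : radialRetraction r z ≠ 0 :=
  mul_ne_zero (ofReal_ne_zero.mpr (by positivity)) hz

theorem continuous_radialRetraction (hr : 0 < r) : Continuous (radialRetraction r) :=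
  (continuous_ofReal.comp (continuous_const.div (continuous_const.max continuous_norm)
    fun z => (hr.trans_le (le_max_left r ‖z‖)).ne')).mul continuous_id

end radialRetraction

theorem continuous_mul_of_eventuallyEq_zero {X R : Type*} [TopologicalSpace X] [TopologicalSpace R]
    [MulZeroClass R] [ContinuousMul R] {ρ F : X → R} {x₀ : X} (hρ : Continuous ρ)
    (hρ₀ : ρ =ᶠ[𝓝 x₀] 0) (hF : ∀ x ≠ x₀, ContinuousAt F x) : Continuous fun x => ρ x * F x := by
  refine continuous_iff_continuousAt.mpr fun x => ?_
  rcases eq_or_ne x x₀ with rfl | hx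
  · exact (continuousAt_const (y := (0 : R))).congr (hρ₀.mono fun y hy => by simp [hy])
  · exact hρ.continuousAt.mul (hF x hx)

theorem exists_mul_exp_eq_powerMap {u : ℂ → ℂ} (hu : ContinuousOn u unitDisk) {r : ℝ} (hr : 0 < r)
    (hr1 : r < 1) (hu0 : ∀ z ∈ unitDisk, r ≤ ‖z‖ → u z ≠ 0) :
    ∃ (d : ℤ) (f : ℂ → ℂ), Continuous f ∧ ∀ z, r ≤ ‖z‖ →
      u (radialRetraction r z) * exp (f z) = powerMap d (radialRetraction r z) := by
  have hS : sphere (0 : ℂ) r ⊆ unitDisk := sphere_subset_ball hr1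
  obtain ⟨d, F, hF, hFeq⟩ := exists_mul_exp_eq_powerMap_on_sphere hr (hu.mono hS)
    fun w hw => hu0 w (hS hw) (mem_sphere_zero_iff_norm.mp hw).ge
  -- `F ∘ radialRetraction r` is a function of `arg z`, discontinuous at `0`: cut it off there.
  set ρ : ℂ → ℝ := fun z => min 1 (max 0 (2 * ‖z‖ / r - 1))
  have hρ₀ : ∀ z ∈ ball (0 : ℂ) (r / 2), ρ z = 0 := fun z hz => by
    have : 2 * ‖z‖ / r - 1 ≤ 0 := by
      rw [sub_nonpos, div_le_one hr]; linarith [mem_ball_zero_iff.mp hz]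
    simp [ρ, max_eq_left this]
  have hρ₁ : ∀ z : ℂ, r ≤ ‖z‖ → ρ z = 1 := fun z hz => by
    have : 1 ≤ 2 * ‖z‖ / r - 1 := by
      rw [le_sub_iff_add_le, le_div_iff₀ hr]; linarith
    simp [ρ, max_eq_right (zero_le_one.trans this), min_eq_left this]
  refine ⟨d, fun z => (ρ z : ℂ) * F (radialRetraction r z),
    continuous_mul_of_eventuallyEq_zero (x₀ := 0) (by fun_prop) ?_ fun z hz => ?_, fun z hz => ?_⟩
  · filter_upwards [ball_mem_nhds 0 (half_pos hr)] with z hz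
    simp [hρ₀ z hz]
  · exact (hF _ (radialRetraction_ne_zero hr hz)).comp (continuous_radialRetraction hr).continuousAt
  · simp only [hρ₁ z hz, ofReal_one, one_mul]
    exact hFeq _ (mem_sphere_zero_iff_norm.mpr (norm_radialRetraction_of_le hr hz))

theorem mem_unitDisk {z : ℂ} : z ∈ unitDisk ↔ ‖z‖ < 1 := mem_ball_zero_iff

theorem admissible_pow (n : ℕ) : Admissible (· ^ n) := by
  refine ⟨(continuous_pow n).continuousOn, ?_⟩
  calc closure {z ∈ unitDisk | z ^ n = 0} ⊆ closure {0} :=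
        closure_mono fun z hz => pow_eq_zero_iff'.mp hz.2 |>.1
    _ ⊆ unitDisk := by simp [mem_unitDisk]

theorem Admissible.exists_ne_zero_of_le_norm {u : ℂ → ℂ} (hu : Admissible u) :
    ∃ r : ℝ, 0 < r ∧ r < 1 ∧ ∀ z ∈ unitDisk, r ≤ ‖z‖ → u z ≠ 0 := by
  obtain ⟨r, ⟨hr0, hr1⟩, hsub⟩ := exists_pos_lt_subset_ball one_pos isClosed_closure hu.2
  exact ⟨r, hr0, hr1, fun z hz hrz h0 =>
    (mem_ball_zero_iff.mp (hsub (subset_closure ⟨hz, h0⟩))).not_ge hrz⟩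

theorem ContinuousOn.comp_snd {α β γ : Type*} [TopologicalSpace α] [TopologicalSpace β]
    [TopologicalSpace γ] {f : β → γ} {t : Set β} (hf : ContinuousOn f t) (s : Set α) :
    ContinuousOn (fun p : α × β => f p.2) (s ×ˢ t) :=
  hf.comp continuousOn_snd fun _ hp => hp.2

namespace MultiplicityAxioms

variable {I : (ℂ → ℂ) → ℤ}

theorem apply_pow (hI : MultiplicityAxioms I) (n : ℕ) : I (· ^ n) = n := by
  obtain ⟨-, hI₁, -, -, -, hI₅⟩ := hI
  rcases n.eq_zero_or_pos with rfl | hn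
  · simpa using hI₁ _ (admissible_pow 0) (by simp)
  refine (hI₅ _ (admissible_pow n) (differentiable_pow n).differentiableOn {0} ?_ (fun _ => n)
    fun z hz => ⟨fun _ => 1, analyticAt_const, one_ne_zero, .of_forall fun w => ?_⟩).trans (by simp)
  · ext z
    simp +contextual [mem_unitDisk, hn.ne']
  · simp [Finset.mem_singleton.mp hz]

theorem apply_powerMap (hI : MultiplicityAxioms I) (d : ℤ) : I (powerMap d) = d := by
  rcases le_or_gt 0 d with hd | hd
  · have : powerMap d = (· ^ d.toNat) := by
      ext z; simp [powerMap, Int.toNat_eq_zero.mpr (neg_nonpos.mpr hd)]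
    rw [this, hI.apply_pow, Int.toNat_of_nonneg hd]
  · have : powerMap d = fun z => (conj z) ^ (-d).toNat := by
      ext z; simp [powerMap, Int.toNat_eq_zero.mpr hd.le]
    rw [this, hI.2.2.2.1 _ (admissible_pow _), hI.apply_pow, Int.toNat_of_nonneg (by omega)]
    ring

theorem apply_eq_apply_of_eqOn_diff (hI : MultiplicityAxioms I) {v w : ℂ → ℂ}
    (hv : ContinuousOn v unitDisk) (hw : ContinuousOn w unitDisk) {K : Set ℂ} (hK : IsCompact K)
    (hKD : K ⊆ unitDisk) (hvw : ∀ z ∈ unitDisk \ K, v z = w z) (hv0 : ∀ z ∈ unitDisk \ K, v z ≠ 0) :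
    I v = I w := by
  have hvs := hv.comp_snd (Set.Icc (0 : ℝ) 1)
  have hws := hw.comp_snd (Set.Icc (0 : ℝ) 1)
  obtain ⟨-, -, hhom, -⟩ := hI
  simpa using hhom (fun p => v p.2 + p.1 * (w p.2 - v p.2))
    (hvs.add ((continuous_ofReal.comp continuous_fst).continuousOn.mul (hws.sub hvs)))
    ⟨K, hK, hKD, fun t _ z hz => by simpa [hvw z hz] using hv0 z hz⟩

theorem apply_mul_exp (hI : MultiplicityAxioms I) {v f : ℂ → ℂ} (hv : ContinuousOn v unitDisk)
    (hf : ContinuousOn f unitDisk) {K : Set ℂ} (hK : IsCompact K) (hKD : K ⊆ unitDisk)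
    (hv0 : ∀ z ∈ unitDisk \ K, v z ≠ 0) : I (fun z => v z * exp (f z)) = I v := by
  have hvs := hv.comp_snd (Set.Icc (0 : ℝ) 1)
  have hfs := hf.comp_snd (Set.Icc (0 : ℝ) 1)
  obtain ⟨-, -, hhom, -⟩ := hI
  simpa using (hhom (fun p => v p.2 * exp (p.1 * f p.2))
    (hvs.mul ((continuous_ofReal.comp continuous_fst).continuousOn.mul hfs).cexp)
    ⟨K, hK, hKD, fun t _ z hz => mul_ne_zero (hv0 z hz) (exp_ne_zero _)⟩).symm

theorem apply_comp_radialRetraction (hI : MultiplicityAxioms I) {v : ℂ → ℂ}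
    (hv : ContinuousOn v unitDisk) {r : ℝ} (hr : 0 < r) (hr1 : r < 1)
    (hv0 : ∀ z ∈ unitDisk, r ≤ ‖z‖ → v z ≠ 0) :
    I (fun z => v (radialRetraction r z)) = I v := by
  -- `t ↦ c (t, z) * z` runs radially from `radialRetraction r z` to `z`.
  set c : ℝ × ℂ → ℝ := fun p => (1 - p.1) * (r / max r ‖p.2‖) + p.1
  have hc_cont : Continuous c := by
    refine .add (.mul (by fun_prop) (continuous_const.div (by fun_prop) fun p => ?_)) continuous_fst
    exact (hr.trans_le (le_max_left _ _)).ne'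
  have hc : ∀ t ∈ Set.Icc (0 : ℝ) 1, ∀ z : ℂ, 0 ≤ c (t, z) ∧ c (t, z) ≤ 1 := by
    intro t ht z
    have ha₀ : 0 ≤ r / max r ‖z‖ := div_nonneg hr.le (hr.le.trans (le_max_left _ _))
    have ha₁ : r / max r ‖z‖ ≤ 1 :=
      div_le_one_of_le₀ (le_max_left _ _) (hr.le.trans (le_max_left _ _))
    constructor <;> nlinarith [ht.1, ht.2]
  have hnorm : ∀ t ∈ Set.Icc (0 : ℝ) 1, ∀ z : ℂ, ‖(c (t, z) : ℂ) * z‖ = c (t, z) * ‖z‖ :=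
    fun t ht z => by rw [norm_mul, norm_real, Real.norm_of_nonneg (hc t ht z).1]
  have hmem : ∀ p ∈ Set.Icc (0 : ℝ) 1 ×ˢ unitDisk, (c p : ℂ) * p.2 ∈ unitDisk := by
    rintro ⟨t, z⟩ ⟨ht, hz⟩
    rw [mem_unitDisk, hnorm t ht z]
    exact (mul_le_of_le_one_left (norm_nonneg z) (hc t ht z).2).trans_lt (mem_unitDisk.mp hz)
  have hc_r : ∀ t ∈ Set.Icc (0 : ℝ) 1, ∀ z : ℂ, r ≤ ‖z‖ → r ≤ ‖(c (t, z) : ℂ) * z‖ := by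
    intro t ht z hz
    rw [hnorm t ht z, show c (t, z) * ‖z‖ = (1 - t) * r + t * ‖z‖ by
      simp only [c, max_eq_right hz]; field_simp [(hr.trans_le hz).ne']]
    nlinarith [ht.1, ht.2]
  obtain ⟨-, -, hhom, -⟩ := hI
  have := hhom (fun p => v (c p * p.2)) (hv.comp (by fun_prop) hmem)
    ⟨closedBall 0 r, isCompact_closedBall _ _, closedBall_subset_ball hr1, fun t ht z hz =>
      hv0 _ (hmem (t, z) ⟨ht, hz.1⟩) (hc_r t ht z (le_of_lt (by simpa using hz.2)))⟩
  simpa [c, radialRetraction] using this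

theorem apply_eq_of_mul_exp_eq_powerMap (hI : MultiplicityAxioms I) {u : ℂ → ℂ}
    (hu : ContinuousOn u unitDisk) {r : ℝ} (hr : 0 < r) (hr1 : r < 1)
    (hu0 : ∀ z ∈ unitDisk, r ≤ ‖z‖ → u z ≠ 0) {d : ℤ} {f : ℂ → ℂ} (hf : Continuous f)
    (hfd : ∀ z, r ≤ ‖z‖ →
      u (radialRetraction r z) * exp (f z) = powerMap d (radialRetraction r z)) :
    I u = d := by
  set ν := radialRetraction r
  have hK : closedBall (0 : ℂ) r ⊆ unitDisk := closedBall_subset_ball hr1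
  have hr_le : ∀ z ∈ unitDisk \ closedBall 0 r, r ≤ ‖z‖ := fun z hz =>
    le_of_lt (by simpa using hz.2)
  have huν : ContinuousOn (fun z => u (ν z)) unitDisk :=
    hu.comp (continuous_radialRetraction hr).continuousOn fun z hz =>
      mem_unitDisk.mpr ((norm_radialRetraction_le hr z).trans_lt (mem_unitDisk.mp hz))
  have huν0 : ∀ z ∈ unitDisk \ closedBall 0 r, u (ν z) ≠ 0 := fun z hz => by
    have hνz := norm_radialRetraction_of_le hr (hr_le z hz)
    exact hu0 _ (mem_unitDisk.mpr (hνz.trans_lt hr1)) hνz.ge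
  calc I u = I (fun z => u (ν z)) := (hI.apply_comp_radialRetraction hu hr hr1 hu0).symm
    _ = I (fun z => u (ν z) * exp (f z)) :=
      (hI.apply_mul_exp huν hf.continuousOn (isCompact_closedBall 0 r) hK huν0).symm
    _ = I (fun z => powerMap d (ν z)) :=
      hI.apply_eq_apply_of_eqOn_diff (huν.mul hf.continuousOn.cexp)
        ((continuous_powerMap d).comp (continuous_radialRetraction hr)).continuousOn
        (isCompact_closedBall 0 r) hK (fun z hz => hfd z (hr_le z hz))
        fun z hz => mul_ne_zero (huν0 z hz) (exp_ne_zero _)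
    _ = I (powerMap d) := hI.apply_comp_radialRetraction (continuous_powerMap d).continuousOn
      hr hr1 fun z _ hz => powerMap_ne_zero d (norm_pos_iff.mp (hr.trans_le hz))
    _ = d := hI.apply_powerMap d

end MultiplicityAxioms

/-- Proposition 6.1 of the paper: any two integer-valued functionals on
admissible maps `D → ℂ` satisfying the five axioms of the multiplicity agree. -/
theorem multiplicity_functional_unique
    (I₁ I₂ : (ℂ → ℂ) → ℤ)
    (h₁ : MultiplicityAxioms I₁) (h₂ : MultiplicityAxioms I₂) :
    ∀ u : ℂ → ℂ, Admissible u → I₁ u = I₂ u := by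
  intro u hu
  obtain ⟨r, hr, hr1, hu0⟩ := hu.exists_ne_zero_of_le_norm
  obtain ⟨d, f, hf, hfd⟩ := exists_mul_exp_eq_powerMap hu.1 hr hr1 hu0
  rw [h₁.apply_eq_of_mul_exp_eq_powerMap hu.1 hr hr1 hu0 hf hfd,
    h₂.apply_eq_of_mul_exp_eq_powerMap hu.1 hr hr1 hu0 hf hfd]
end
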